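/- arXiv:1710.00296 — 7 statements merged into one kernel-verified Lean document; each statement's English description precedes it below -/
import Mathlib

section
/- Let n and k be integers with 1 ≤ k and 2k ≤ n, and let p(n,k) = (C(n−k,k) + k·C(n−k,k−1)) / C(n,k). Then p(n,k) = (∏_{i=0}^{k−1} (1 − k/(n−i))) · (1 + k²/(n−2k+1)). -/
/-!
Since `C(n-k,k) / C(n,k) = (n-k)↓k / n↓k = ∏_{i<k} (n-k-i)/(n-i)`, the product is the first term
of `p(n,k)`. The second term is `k²/(n-2k+1)` times the first, by the Pascal-type relation
`C(m,k) · k = C(m,k-1) · (m-k+1)` with `m = n-k`.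
-/

open Finset

lemma prod_one_sub_div_eq_descFactorial_div {m n k : ℕ} (h : m + k ≤ n) :
    ∏ i ∈ range k, (1 - (m : ℝ) / ((n : ℝ) - i)) =
      ((n - m).descFactorial k : ℝ) / (n.descFactorial k : ℝ) := by
  rw [Nat.descFactorial_eq_prod_range, Nat.descFactorial_eq_prod_range, Nat.cast_prod,
    Nat.cast_prod, ← prod_div_distrib]
  refine prod_congr rfl fun i hi => ?_
  have hik : i < k := mem_range.mp hi
  have hni : (n : ℝ) - i ≠ 0 := sub_ne_zero.mpr (by norm_cast; omega)
  rw [Nat.cast_sub (by omega), Nat.cast_sub (by omega), Nat.cast_sub (by omega)]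
  field_simp
  ring

lemma descFactorial_div_descFactorial_eq_choose_div (a b k : ℕ) :
    (a.descFactorial k : ℝ) / (b.descFactorial k : ℝ) = (a.choose k : ℝ) / (b.choose k : ℝ) := by
  simp only [Nat.descFactorial_eq_factorial_mul_choose, Nat.cast_mul]
  exact mul_div_mul_left _ _ (by positivity)

/-- The factor `k` keeps the identity true at `k = 0`, where `k - 1` truncates to `0`. -/
lemma cast_mul_choose_pred_mul_eq {m k : ℕ} (hkm : k ≤ m) :
    (k : ℝ) * m.choose (k - 1) * ((m : ℝ) - k + 1) = (k : ℝ) ^ 2 * m.choose k := by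
  obtain _ | j := k
  · simp
  · have h := congrArg (Nat.cast : ℕ → ℝ) (Nat.choose_succ_right_eq m j)
    rw [Nat.cast_mul, Nat.cast_mul, Nat.cast_sub (by omega)] at h
    push_cast at h ⊢
    linear_combination (-((j : ℝ) + 1)) * h

theorem stmt_0_general (n k : ℕ) (hkn : 2 * k ≤ n) :
    ((Nat.choose (n - k) k : ℝ) + (k : ℝ) * (Nat.choose (n - k) (k - 1) : ℝ)) /
        (Nat.choose n k : ℝ)
      = (∏ i ∈ Finset.range k, (1 - (k : ℝ) / ((n : ℝ) - (i : ℝ)))) *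
          (1 + (k : ℝ) ^ 2 / ((n : ℝ) - 2 * (k : ℝ) + 1)) := by
  have hD : (0 : ℝ) < (n : ℝ) - 2 * (k : ℝ) + 1 := by
    have : (2 * k : ℝ) ≤ n := by exact_mod_cast hkn
    linarith
  have hchoose : (n.choose k : ℝ) ≠ 0 := by exact_mod_cast (Nat.choose_pos (by omega)).ne'
  have hpascal := cast_mul_choose_pred_mul_eq (m := n - k) (k := k) (by omega)
  rw [Nat.cast_sub (by omega), sub_sub, ← two_mul] at hpascal
  rw [prod_one_sub_div_eq_descFactorial_div (by omega),
    descFactorial_div_descFactorial_eq_choose_div]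
  generalize (n : ℝ) - 2 * k + 1 = D at hD hpascal ⊢
  field_simp
  linear_combination hpascal

/-- In the limited fork-join model, the probability `p(n,k)` that a job selecting `k`
distinct servers uniformly at random among `n` servers sends tasks to at most one server
from a fixed set of `k` servers satisfies the product identity from the proof of Lemma 1. -/
theorem stmt_0 (n k : ℕ) (hk : 1 ≤ k) (hkn : 2 * k ≤ n) :
    ((Nat.choose (n - k) k : ℝ) + (k : ℝ) * (Nat.choose (n - k) (k - 1) : ℝ)) /
        (Nat.choose n k : ℝ)
      = (∏ i ∈ Finset.range k, (1 - (k : ℝ) / ((n : ℝ) - (i : ℝ)))) *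
          (1 + (k : ℝ) ^ 2 / ((n : ℝ) - 2 * (k : ℝ) + 1)) :=
  stmt_0_general n k hkn
end

section
/- Let n and k be integers with 1 ≤ k and 2k ≤ n, and let p(n,k) = (C(n−k,k) + k·C(n−k,k−1)) / C(n,k). Then p(n,k) ≥ (1 − k/(n−k+1))^k · (1 + k²/(n−k+1)). -/
open Finset

/-! Write `n = m + k`. Then `C(m,k) / C(n,k) = ∏_{i<k} (m - i) / (n - i)`, and each factor
`1 - k / (n - i)` is at least `1 - k / (m + 1)`, so `C(m,k) ≥ (1 - k/(m+1))^k C(n,k)`. The second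
summand is controlled by `k C(m,k) = (m - k + 1) C(m,k-1) ≤ (m + 1) C(m,k-1)`. -/

lemma Nat.cast_descFactorial_eq_prod_sub {R : Type*} [CommRing R] {a k : ℕ} (h : k ≤ a + 1) :
    (a.descFactorial k : R) = ∏ i ∈ range k, ((a : R) - i) := by
  rw [Nat.descFactorial_eq_prod_range, Nat.cast_prod]
  exact prod_congr rfl fun i hi => Nat.cast_sub (by have := mem_range.mp hi; omega)

lemma one_sub_div_pow_mul_descFactorial_add_le {m k : ℕ} (h : k ≤ m + 1) :
    (1 - k / (m + 1 : ℝ)) ^ k * (m + k).descFactorial k ≤ m.descFactorial k := by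
  have hpos : (0 : ℝ) < m + 1 := by positivity
  have hk : (k : ℝ) ≤ m + 1 := by exact_mod_cast h
  have hc : 0 ≤ 1 - k / (m + 1 : ℝ) := sub_nonneg.mpr ((div_le_one hpos).mpr hk)
  rw [Nat.cast_descFactorial_eq_prod_sub h, Nat.cast_descFactorial_eq_prod_sub (by omega)]
  calc (1 - k / (m + 1 : ℝ)) ^ k * ∏ i ∈ range k, (((m + k : ℕ) : ℝ) - i)
      = ∏ i ∈ range k, (1 - k / (m + 1 : ℝ)) * (((m + k : ℕ) : ℝ) - i) := by
        rw [prod_mul_distrib, prod_const, card_range]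
    _ ≤ ∏ i ∈ range k, ((m : ℝ) - i) := by
      refine prod_le_prod (fun i hi => mul_nonneg hc ?_) fun i hi => ?_
      all_goals
        have hik : (i : ℝ) + 1 ≤ k := by exact_mod_cast mem_range.mp hi
        push_cast
      · linarith
      have hfac : (k : ℝ) ≤ k / (m + 1) * (m + k - i) := by
        rw [div_mul_eq_mul_div, le_div_iff₀ hpos]
        nlinarith
      nlinarith

lemma one_sub_div_pow_mul_choose_add_le {m k : ℕ} (h : k ≤ m + 1) :
    (1 - k / (m + 1 : ℝ)) ^ k * (m + k).choose k ≤ m.choose k := by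
  have hdesc := one_sub_div_pow_mul_descFactorial_add_le h
  simp only [Nat.descFactorial_eq_factorial_mul_choose, Nat.cast_mul] at hdesc
  have hfac : (0 : ℝ) < k.factorial := by exact_mod_cast k.factorial_pos
  exact le_of_mul_le_mul_left (by rwa [mul_left_comm]) hfac

lemma Nat.mul_choose_le_succ_mul_choose_pred (m k : ℕ) :
    k * m.choose k ≤ (m + 1) * m.choose (k - 1) := by
  rcases k with _ | j
  · simp
  · rw [mul_comm, Nat.choose_succ_right_eq, Nat.add_sub_cancel, mul_comm]
    gcongr
    omega

theorem choose_add_mul_choose_pred_div_choose_add_ge {m k : ℕ} (h : k ≤ m + 1) :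
    ((m.choose k : ℝ) + k * m.choose (k - 1)) / (m + k).choose k
      ≥ (1 - k / (m + 1 : ℝ)) ^ k * (1 + k ^ 2 / (m + 1)) := by
  have hpos : (0 : ℝ) < m + 1 := by positivity
  have hA := one_sub_div_pow_mul_choose_add_le h
  have hB : (k : ℝ) * m.choose k ≤ (m + 1) * m.choose (k - 1) := by
    exact_mod_cast Nat.mul_choose_le_succ_mul_choose_pred m k
  have hchoose : (0 : ℝ) < (m + k).choose k := by exact_mod_cast Nat.choose_pos (by omega)
  rw [ge_iff_le, le_div_iff₀ hchoose]
  calc (1 - k / (m + 1 : ℝ)) ^ k * (1 + k ^ 2 / (m + 1)) * ((m + k).choose k : ℝ)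
      = (1 + k ^ 2 / (m + 1)) * ((1 - k / (m + 1 : ℝ)) ^ k * (m + k).choose k) := by ring
    _ ≤ (1 + k ^ 2 / (m + 1)) * (m.choose k : ℝ) := by gcongr
    _ = m.choose k + k / (m + 1) * (k * m.choose k : ℝ) := by ring
    _ ≤ m.choose k + k / (m + 1) * ((m + 1) * m.choose (k - 1) : ℝ) := by gcongr
    _ = m.choose k + k * m.choose (k - 1) := by field_simp

theorem stmt_1_general (n k : ℕ) (hkn : 2 * k ≤ n) :
    ((Nat.choose (n - k) k : ℝ) + (k : ℝ) * (Nat.choose (n - k) (k - 1) : ℝ)) /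
        (Nat.choose n k : ℝ)
      ≥ (1 - (k : ℝ) / ((n : ℝ) - (k : ℝ) + 1)) ^ k *
          (1 + (k : ℝ) ^ 2 / ((n : ℝ) - (k : ℝ) + 1)) := by
  obtain ⟨m, rfl⟩ := Nat.exists_eq_add_of_le' (by omega : k ≤ n)
  have hm : ((m + k : ℕ) : ℝ) - k + 1 = m + 1 := by push_cast; ring
  rw [hm, Nat.add_sub_cancel]
  exact choose_add_mul_choose_pred_div_choose_add_ge (by omega)

/-- Lower bound on the probability `p(n,k)` from the proof of Lemma 1 of the paper. -/
theorem stmt_1 (n k : ℕ) (hk : 1 ≤ k) (hkn : 2 * k ≤ n) :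
    ((Nat.choose (n - k) k : ℝ) + (k : ℝ) * (Nat.choose (n - k) (k - 1) : ℝ)) /
        (Nat.choose n k : ℝ)
      ≥ (1 - (k : ℝ) / ((n : ℝ) - (k : ℝ) + 1)) ^ k *
          (1 + (k : ℝ) ^ 2 / ((n : ℝ) - (k : ℝ) + 1)) :=
  stmt_1_general n k hkn
end

section
/- Let n and k be integers with 1 ≤ k and 2k ≤ n, and let p(n,k) = (C(n−k,k) + k·C(n−k,k−1)) / C(n,k). Then 1 − p(n,k) ≤ k⁴ / (n−k+1)². -/
/-!
By Vandermonde, `C(n, k) = ∑ᵢ C(k, i) C(n - k, k - i)`, and the numerator of `p(n, k)` is the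
part `i ≤ 1` of this sum. For `i ≥ 2` we have `C(k, i) ≤ C(k, 2) C(k - 2, i - 2)`, so by
Vandermonde again the rest is at most `C(k, 2) C(n - 2, k - 2) = C(k, 2)² C(n, k) / C(n, 2)`.
Hence `1 - p(n, k) ≤ C(k, 2)² / C(n, 2)`, which is at most `k⁴ / (n - k + 1)²`.
-/

open Finset

theorem Nat.choose_add_two_le_choose_two_mul (k i : ℕ) :
    (k + 2).choose (i + 2) ≤ (k + 2).choose 2 * k.choose i := by
  have hmul := Nat.choose_mul (n := k + 2) (k := i + 2) (s := 2) (by omega)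
  simp only [Nat.add_sub_cancel] at hmul
  calc (k + 2).choose (i + 2) ≤ (k + 2).choose (i + 2) * (i + 2).choose 2 :=
        Nat.le_mul_of_pos_right _ (Nat.choose_pos (by omega))
    _ = (k + 2).choose 2 * k.choose i := hmul

theorem Nat.add_choose_le_add_choose_two_mul (m : ℕ) :
    ∀ k, (m + k).choose k ≤
      m.choose k + k * m.choose (k - 1) + k.choose 2 * (m + k - 2).choose (k - 2)
  | 0 | 1 => by simp
  | k + 2 => by
    have tail : ∑ ij ∈ antidiagonal k, m.choose ij.1 * (k + 2).choose (ij.2 + 2) ≤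
        (k + 2).choose 2 * (m + k).choose k := by
      rw [Nat.add_choose_eq m k k, mul_sum]
      refine sum_le_sum fun ij _ => ?_
      calc m.choose ij.1 * (k + 2).choose (ij.2 + 2)
          ≤ m.choose ij.1 * ((k + 2).choose 2 * k.choose ij.2) :=
            Nat.mul_le_mul_left _ (Nat.choose_add_two_le_choose_two_mul k ij.2)
        _ = (k + 2).choose 2 * (m.choose ij.1 * k.choose ij.2) := by ring
    rw [Nat.add_choose_eq, Nat.sum_antidiagonal_succ', Nat.sum_antidiagonal_succ']
    simp only [Nat.choose_zero_right, zero_add, Nat.choose_one_right, Nat.add_sub_cancel,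
      Nat.add_succ_sub_one, show m + (k + 2) - 2 = m + k by omega]
    linarith

theorem one_sub_div_choose_le_choose_two_sq_div {n k : ℕ} (hkn : k ≤ n) :
    1 - ((n - k).choose k + k * (n - k).choose (k - 1) : ℝ) / n.choose k ≤
      ((k.choose 2) ^ 2 : ℝ) / n.choose 2 := by
  have hpos : (0 : ℝ) < n.choose k := by exact_mod_cast Nat.choose_pos hkn
  have hsplit : (n.choose k : ℝ) ≤ (n - k).choose k + k * (n - k).choose (k - 1) +
      k.choose 2 * (n - 2).choose (k - 2) := by
    have := Nat.add_choose_le_add_choose_two_mul (n - k) k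
    rw [Nat.sub_add_cancel hkn] at this
    exact_mod_cast this
  calc 1 - ((n - k).choose k + k * (n - k).choose (k - 1) : ℝ) / n.choose k
      ≤ (k.choose 2 * (n - 2).choose (k - 2) : ℝ) / n.choose k := by
        rw [one_sub_div hpos.ne', div_le_div_iff_of_pos_right hpos]
        linarith
    _ = ((k.choose 2) ^ 2 : ℝ) / n.choose 2 := by
        rcases lt_or_ge k 2 with hk | hk
        · simp [Nat.choose_eq_zero_of_lt hk]
        have hn : (0 : ℝ) < n.choose 2 := by exact_mod_cast Nat.choose_pos (hk.trans hkn)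
        rw [div_eq_div_iff hpos.ne' hn.ne']
        have key : (n.choose k * k.choose 2 : ℝ) = n.choose 2 * (n - 2).choose (k - 2) := by
          exact_mod_cast Nat.choose_mul (n := n) hk
        linear_combination (-(k.choose 2 : ℝ)) * key

theorem choose_two_sq_div_choose_two_le {n k : ℕ} (hkn : k ≤ n) :
    ((k.choose 2) ^ 2 : ℝ) / n.choose 2 ≤ (k : ℝ) ^ 4 / (n - k + 1) ^ 2 := by
  rcases lt_or_ge k 2 with hk | hk
  · rw [Nat.choose_eq_zero_of_lt hk, Nat.cast_zero, zero_pow two_ne_zero, zero_div]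
    positivity
  have hkR : (2 : ℝ) ≤ k := by exact_mod_cast hk
  have hknR : (k : ℝ) ≤ n := by exact_mod_cast hkn
  rw [Nat.cast_choose_two, Nat.cast_choose_two, div_le_div_iff₀ (by nlinarith) (by nlinarith)]
  have h1 : ((k : ℝ) - 1) ^ 2 ≤ k ^ 2 := by nlinarith
  have h2 : ((n : ℝ) - k + 1) ^ 2 ≤ n * (n - 1) := by nlinarith
  nlinarith [mul_le_mul h1 h2 (sq_nonneg _) (sq_nonneg _), sq_nonneg (k : ℝ)]

theorem stmt_2_general (n k : ℕ) (hkn : 2 * k ≤ n) :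
    1 - ((Nat.choose (n - k) k : ℝ) + (k : ℝ) * (Nat.choose (n - k) (k - 1) : ℝ)) /
          (Nat.choose n k : ℝ)
      ≤ (k : ℝ) ^ 4 / ((n : ℝ) - (k : ℝ) + 1) ^ 2 :=
  (one_sub_div_choose_le_choose_two_sq_div (by omega)).trans
    (choose_two_sq_div_choose_two_le (by omega))

/-- Explicit-constant version of the bound `1 - p(n,k) = O(k⁴/(n-k+1)²)` from the proof of
Lemma 1 of the paper. -/
theorem stmt_2 (n k : ℕ) (hk : 1 ≤ k) (hkn : 2 * k ≤ n) :
    1 - ((Nat.choose (n - k) k : ℝ) + (k : ℝ) * (Nat.choose (n - k) (k - 1) : ℝ)) /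
          (Nat.choose n k : ℝ)
      ≤ (k : ℝ) ^ 4 / ((n : ℝ) - (k : ℝ) + 1) ^ 2 :=
  stmt_2_general n k hkn
end

section
/- Let λ > 0 and c > 0 be reals, and let n and k be integers with 1 ≤ k and 2k ≤ n. Let p(n,k) = (C(n−k,k) + k·C(n−k,k−1)) / C(n,k), Λ = nλ/k, and τ = c√n / k. Then 1 − exp(−Λ·τ·(1 − p(n,k))) ≤ 4cλk²/√n. -/
/-!
Write `n = m + k`. Grouping the `k`-subsets `B` of an `n`-set by `i = #(A ∩ B)` for a fixed
`k`-subset `A` (Vandermonde), `1 - p(n, k)` is the proportion of those `B` with `i ≥ 2`.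
Weighting each such `B` by `C(i, 2) ≥ 1` counts pairs (pair inside `A ∩ B`, `B`), so that
`C(n, 2) · #{B : i ≥ 2} ≤ C(k, 2)² · C(n, k)`, i.e. `1 - p(n, k) ≤ k⁴ / n²`.
Since `Λτ = cλ n^{3/2} / k²`, the bound `1 - e^{-y} ≤ y` then gives `cλk²/√n`.
-/

open Finset

def overlapCount (m k : ℕ) : ℕ := ∑ i ∈ Ico 2 (k + 1), k.choose i * m.choose (k - i)

lemma add_choose_eq_add_overlapCount (m : ℕ) {k : ℕ} (hk : 1 ≤ k) :
    (m + k).choose k = m.choose k + k * m.choose (k - 1) + overlapCount m k := by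
  rw [add_comm, Nat.add_choose_eq, Nat.sum_antidiagonal_eq_sum_range_succ
      (fun i j => k.choose i * m.choose j), ← sum_range_add_sum_Ico _ (by omega : 2 ≤ k + 1)]
  simp [overlapCount, sum_range_succ]

lemma sum_choose_two_mul_overlap (m k : ℕ) :
    ∑ i ∈ Ico 2 (k + 1), i.choose 2 * (k.choose i * m.choose (k - i)) =
      k.choose 2 * (m + k - 2).choose (k - 2) := by
  rcases Nat.lt_or_ge k 2 with hk | hk
  · interval_cases k <;> simp
  obtain ⟨k, rfl⟩ := Nat.exists_eq_add_of_le' hk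
  have hterm : ∀ i ∈ Ico 2 (k + 2 + 1), i.choose 2 * ((k + 2).choose i * m.choose (k + 2 - i)) =
      (k + 2).choose 2 * (k.choose (i - 2) * m.choose (k - (i - 2))) := by
    intro i hi
    have h2i : 2 ≤ i := (mem_Ico.mp hi).1
    rw [← mul_assoc, mul_comm (i.choose 2), Nat.choose_mul h2i]
    simp only [Nat.add_sub_cancel, mul_assoc, show k + 2 - i = k - (i - 2) by omega]
  rw [sum_congr rfl hterm, ← mul_sum, sum_Ico_eq_sum_range]
  simp only [show k + 2 + 1 - 2 = k + 1 by omega, Nat.add_sub_cancel_left,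
    show m + (k + 2) - 2 = k + m by omega, Nat.add_sub_cancel]
  congr 1
  rw [Nat.add_choose_eq, Nat.sum_antidiagonal_eq_sum_range_succ (fun i j => k.choose i * m.choose j)]

lemma overlapCount_le (m k : ℕ) : overlapCount m k ≤ k.choose 2 * (m + k - 2).choose (k - 2) := by
  rw [← sum_choose_two_mul_overlap]
  exact sum_le_sum fun i hi => Nat.le_mul_of_pos_left _ (Nat.choose_pos (mem_Ico.mp hi).1)

lemma choose_two_mul_overlapCount_le (m k : ℕ) :
    (m + k).choose 2 * overlapCount m k ≤ k.choose 2 ^ 2 * (m + k).choose k := by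
  rcases Nat.lt_or_ge k 2 with hk | hk
  · simp [overlapCount, Ico_eq_empty_of_le (by omega : k + 1 ≤ 2)]
  calc (m + k).choose 2 * overlapCount m k
      ≤ (m + k).choose 2 * (k.choose 2 * (m + k - 2).choose (k - 2)) :=
        Nat.mul_le_mul_left _ (overlapCount_le m k)
    _ = k.choose 2 * ((m + k).choose 2 * (m + k - 2).choose (k - 2)) := by ring
    _ = k.choose 2 ^ 2 * (m + k).choose k := by rw [← Nat.choose_mul hk]; ring

lemma overlapCount_div_choose_le (m k : ℕ) (hmk : 2 ≤ m + k) :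
    (overlapCount m k : ℝ) / (m + k).choose k ≤ (k : ℝ) ^ 4 / ((m + k : ℕ) : ℝ) ^ 2 := by
  set n := m + k
  have hN : (0 : ℝ) < n.choose k := by exact_mod_cast Nat.choose_pos (by omega : k ≤ n)
  have hn : (2 : ℝ) ≤ n := by exact_mod_cast hmk
  have hS : (n.choose 2 : ℝ) * overlapCount m k ≤ (k.choose 2 : ℝ) ^ 2 * n.choose k := by
    exact_mod_cast choose_two_mul_overlapCount_le m k
  have hn2 : (n : ℝ) ^ 2 / 4 ≤ n.choose 2 := by rw [Nat.cast_choose_two]; nlinarith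
  have hk2 : (k.choose 2 : ℝ) ≤ (k : ℝ) ^ 2 / 2 := by
    simpa using Nat.choose_le_pow_div (α := ℝ) 2 k
  rw [div_le_div_iff₀ hN (by positivity)]
  calc (overlapCount m k : ℝ) * (n : ℝ) ^ 2 = 4 * ((n : ℝ) ^ 2 / 4 * overlapCount m k) := by ring
    _ ≤ 4 * ((n.choose 2 : ℝ) * overlapCount m k) := by gcongr
    _ ≤ 4 * ((k.choose 2 : ℝ) ^ 2 * n.choose k) := by gcongr
    _ ≤ 4 * (((k : ℝ) ^ 2 / 2) ^ 2 * n.choose k) := by gcongr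
    _ = (k : ℝ) ^ 4 * n.choose k := by ring

/-- Explicit-constant version of the bound `P(E) = O((k/n^{1/4})²)` from Lemma 1 of the paper,
with `Λ = nλ/k` and `τ = c√n/k`. -/
theorem stmt_4 (lam c : ℝ) (hlam : 0 < lam) (hc : 0 < c) (n k : ℕ)
    (hk : 1 ≤ k) (hkn : 2 * k ≤ n) :
    1 - Real.exp (-(((n : ℝ) * lam / (k : ℝ)) * (c * Real.sqrt (n : ℝ) / (k : ℝ)) *
          (1 - ((Nat.choose (n - k) k : ℝ) + (k : ℝ) * (Nat.choose (n - k) (k - 1) : ℝ)) /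
              (Nat.choose n k : ℝ))))
      ≤ 4 * c * lam * (k : ℝ) ^ 2 / Real.sqrt (n : ℝ) := by
  have hsplit := add_choose_eq_add_overlapCount (n - k) hk
  have hratio := overlapCount_div_choose_le (n - k) k (by omega)
  rw [Nat.sub_add_cancel (by omega : k ≤ n)] at hsplit hratio
  have hN : (0 : ℝ) < n.choose k := by exact_mod_cast Nat.choose_pos (by omega : k ≤ n)
  have hn : (0 : ℝ) < n := by exact_mod_cast (by omega : 0 < n)
  have hp : 1 - ((Nat.choose (n - k) k : ℝ) + (k : ℝ) * (Nat.choose (n - k) (k - 1) : ℝ)) /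
      (Nat.choose n k : ℝ) = (overlapCount (n - k) k : ℝ) / n.choose k := by
    have hcast : (n.choose k : ℝ) = (n - k).choose k + k * (n - k).choose (k - 1) +
        overlapCount (n - k) k := by exact_mod_cast hsplit
    rw [eq_div_iff hN.ne', sub_mul, div_mul_cancel₀ _ hN.ne', one_mul, hcast]
    ring
  rw [hp]
  have one_sub_exp_neg_le (y : ℝ) : 1 - Real.exp (-y) ≤ y := by
    linarith [Real.add_one_le_exp (-y)]
  calc _ ≤ (n * lam / k) * (c * Real.sqrt n / k) * (overlapCount (n - k) k / n.choose k : ℝ) :=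
        one_sub_exp_neg_le _
    _ ≤ (n * lam / k) * (c * Real.sqrt n / k) * (k ^ 4 / n ^ 2) := by gcongr
    _ = c * lam * k ^ 2 / Real.sqrt n := by
        field_simp
        exact Real.sq_sqrt hn.le
    _ ≤ 4 * c * lam * k ^ 2 / Real.sqrt n := by gcongr; linarith
end

section
/- For all integers n and k with 1 ≤ k ≤ n, k²/n − k⁴/(2n²) ≤ 1 − C(n−k,k)/C(n,k) ≤ k²/n, where C(n−k,k) is interpreted as 0 when k > n−k. -/
/-!
Write `r = C(n-k,k) / C(n,k)` for the probability that a random `k`-set misses a fixed one.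
Upper bound on `1 - r`: a union bound over the `k` fixed points, each lying in a fraction `k/n`
of all `k`-sets. Lower bound: `r` is a product of `k` factors `(n-k-i)/(n-i) ≤ 1 - k/n`, and
`(1 - x)^k ≤ 1 - kx + C(k,2) x²` for `0 ≤ x ≤ 1` (the second Bonferroni inequality).
-/

namespace Nat

theorem descFactorial_mul_pow_le_pow_mul_descFactorial {a b : ℕ} (hab : a ≤ b) (m : ℕ) :
    a.descFactorial m * b ^ m ≤ a ^ m * b.descFactorial m := by
  induction m with
  | zero => simp
  | succ m ih =>
    have step : (a - m) * b ≤ a * (b - m) := by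
      rw [Nat.sub_mul, Nat.mul_sub, Nat.mul_comm m b]
      exact Nat.sub_le_sub_left (Nat.mul_le_mul_right m hab) _
    calc a.descFactorial (m + 1) * b ^ (m + 1)
        = (a - m) * b * (a.descFactorial m * b ^ m) := by
          rw [descFactorial_succ, pow_succ]; ring
      _ ≤ a * (b - m) * (a ^ m * b.descFactorial m) := Nat.mul_le_mul step ih
      _ = a ^ (m + 1) * b.descFactorial (m + 1) := by
          rw [descFactorial_succ, pow_succ]; ring

theorem choose_mul_pow_le_pow_mul_choose {a b : ℕ} (hab : a ≤ b) (m : ℕ) :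
    a.choose m * b ^ m ≤ a ^ m * b.choose m := by
  refine Nat.le_of_mul_le_mul_left ?_ m.factorial_pos
  have := descFactorial_mul_pow_le_pow_mul_descFactorial hab m
  rw [descFactorial_eq_factorial_mul_choose, descFactorial_eq_factorial_mul_choose] at this
  linarith

/-- Telescoping Pascal's rule, `C(n, m+1) - C(n-k, m+1) = ∑_{i<k} C(n-1-i, m)`, with every
term bounded by `C(n-1, m)`. -/
theorem choose_succ_le_choose_sub_add_mul_choose (n k m : ℕ) :
    n.choose (m + 1) ≤ (n - k).choose (m + 1) + k * (n - 1).choose m := by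
  induction k with
  | zero => simp
  | succ k ih =>
    obtain hkn | hnk := Nat.lt_or_ge k n
    · have pascal : (n - k).choose (m + 1) =
          (n - (k + 1)).choose m + (n - (k + 1)).choose (m + 1) := by
        rw [show n - k = n - (k + 1) + 1 by omega, choose_succ_succ']
      have mono : (n - (k + 1)).choose m ≤ (n - 1).choose m := choose_le_choose m (by omega)
      rw [pascal] at ih
      linarith
    · rw [show n - k = 0 by omega, choose_zero_succ] at ih
      linarith [Nat.zero_le ((n - (k + 1)).choose (m + 1))]

theorem cast_choose_div_cast_choose_le_pow {a b m : ℕ} (hab : a ≤ b) (hmb : m ≤ b)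
    (hb : 0 < b) : (a.choose m : ℝ) / b.choose m ≤ ((a : ℝ) / b) ^ m := by
  have hchoose : (0 : ℝ) < b.choose m := by exact_mod_cast choose_pos hmb
  rw [div_pow, div_le_div_iff₀ hchoose (by positivity)]
  exact_mod_cast choose_mul_pow_le_pow_mul_choose hab m

end Nat

theorem one_sub_pow_le_one_sub_mul_add_choose_two_mul_sq {x : ℝ} (hx₀ : 0 ≤ x) (hx₁ : x ≤ 1)
    (m : ℕ) : (1 - x) ^ m ≤ 1 - m * x + m.choose 2 * x ^ 2 := by
  induction m with
  | zero => simp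
  | succ m ih =>
    have hchoose : ((m + 1).choose 2 : ℝ) = m.choose 2 + m := by
      rw [Nat.choose_succ_succ, Nat.choose_one_right]; push_cast; ring
    have hx3 : 0 ≤ (m.choose 2 : ℝ) * x ^ 3 := by positivity
    calc (1 - x) ^ (m + 1) = (1 - x) * (1 - x) ^ m := by ring
      _ ≤ (1 - x) * (1 - m * x + m.choose 2 * x ^ 2) := by gcongr
      _ ≤ 1 - ↑(m + 1) * x + ↑((m + 1).choose 2) * x ^ 2 := by
          rw [hchoose]; push_cast; nlinarith

theorem one_sub_choose_sub_div_choose_le {n k : ℕ} (hk : 1 ≤ k) (hkn : k ≤ n) :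
    1 - ((n - k).choose k : ℝ) / n.choose k ≤ (k : ℝ) ^ 2 / n := by
  obtain ⟨m, rfl⟩ : ∃ m, k = m + 1 := ⟨k - 1, by omega⟩
  obtain ⟨N, rfl⟩ : ∃ N, n = N + 1 := ⟨n - 1, by omega⟩
  have hn : (0 : ℝ) < (N + 1 : ℕ) := by positivity
  have hchoose : (0 : ℝ) < (N + 1).choose (m + 1) := by exact_mod_cast Nat.choose_pos hkn
  have hunion : ((N + 1).choose (m + 1) : ℝ) ≤
      (N + 1 - (m + 1)).choose (m + 1) + (m + 1 : ℕ) * N.choose m := by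
    exact_mod_cast Nat.choose_succ_le_choose_sub_add_mul_choose (N + 1) (m + 1) m
  have hpascal : ((N + 1 : ℕ) : ℝ) * N.choose m = (N + 1).choose (m + 1) * (m + 1 : ℕ) := by
    exact_mod_cast Nat.add_one_mul_choose_eq N m
  have hmass : ((m + 1 : ℕ) : ℝ) ^ 2 / (N + 1 : ℕ) * (N + 1).choose (m + 1) =
      (m + 1 : ℕ) * N.choose m := by
    rw [div_mul_eq_mul_div, div_eq_iff hn.ne']
    linear_combination -((m + 1 : ℕ) : ℝ) * hpascal
  rw [sub_le_iff_le_add, ← sub_le_iff_le_add', le_div_iff₀ hchoose, sub_mul, hmass]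
  linarith

/-- Two-sided bound on the probability that a uniformly random `k`-element subset of
`{1,…,n}` intersects a fixed `k`-element subset, used in Lemmas 1–3 of the paper. -/
theorem stmt_6 (n k : ℕ) (hk : 1 ≤ k) (hkn : k ≤ n) :
    (k : ℝ) ^ 2 / (n : ℝ) - (k : ℝ) ^ 4 / (2 * (n : ℝ) ^ 2)
        ≤ 1 - (Nat.choose (n - k) k : ℝ) / (Nat.choose n k : ℝ) ∧
      1 - (Nat.choose (n - k) k : ℝ) / (Nat.choose n k : ℝ) ≤ (k : ℝ) ^ 2 / (n : ℝ) := by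
  refine ⟨?_, one_sub_choose_sub_div_choose_le hk hkn⟩
  have hn : (0 : ℝ) < n := by norm_cast; omega
  have hratio : ((n - k).choose k : ℝ) / n.choose k ≤ (1 - k / n) ^ k := by
    rw [one_sub_div hn.ne', ← Nat.cast_sub hkn]
    exact Nat.cast_choose_div_cast_choose_le_pow (Nat.sub_le n k) hkn (by omega)
  have hbonferroni := one_sub_pow_le_one_sub_mul_add_choose_two_mul_sq (x := k / n)
    (by positivity) ((div_le_one hn).2 (by exact_mod_cast hkn)) k
  have hk2 : (k.choose 2 : ℝ) ≤ k ^ 2 / 2 := by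
    simpa using Nat.choose_le_pow_div (α := ℝ) 2 k
  have hsecond : (k.choose 2 : ℝ) * (k / n) ^ 2 ≤ (k : ℝ) ^ 4 / (2 * (n : ℝ) ^ 2) :=
    calc (k.choose 2 : ℝ) * (k / n) ^ 2 ≤ k ^ 2 / 2 * (k / n) ^ 2 := by gcongr
      _ = (k : ℝ) ^ 4 / (2 * (n : ℝ) ^ 2) := by ring
  have hfirst : (k : ℝ) * (k / n) = k ^ 2 / n := by ring
  linarith
end

section
/- Fix integers n and k with 1 ≤ k ≤ n and a real α with 0 < α ≤ 1. Let S be a uniformly random k-element subset of {1,…,n} and let B be a Bernoulli(α) random variable independent of S. Define the random vector A ∈ {0,1}^k by A_i = B·1{i ∈ S} for i = 1,…,k, and let p = 1 − C(n−k,k)/C(n,k) (with C(n−k,k) = 0 if k > n−k). If α·C(n,k)·p² ≤ 1, then for every pair of nondecreasing functions f, g : {0,1}^k → {0,1} (with the componentwise partial order on {0,1}^k), E[f(A)·g(A)] ≥ E[f(A)]·E[g(A)]. -/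
/-!
Write `c = α / C(n,k)` for the probability of each thrown set, `p` for the probability that a
thrown set meets the first `k` bins, and `E` for the expectation over `A`.  If `f` or `g` is
identically `1` there is nothing to prove, so by monotonicity both vanish at `A = 0`.  Then
`E f ≤ P(A ≠ 0) = α p`, and likewise for `g`; if neither is identically `0`, both equal `1` at
`A = 1`, so `E[f g] ≥ P(A = 1) = c`.  The hypothesis says precisely `(α p)² ≤ c`.
-/

open Finset

theorem Monotone.eq_one_of_map_bot_eq_one {β : Type*} [Preorder β] [OrderBot β] {f : β → ℝ}
    (hf : Monotone f) (hf01 : ∀ v, f v = 0 ∨ f v = 1) (hbot : f ⊥ = 1) : f = 1 := by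
  funext v
  refine le_antisymm ?_ (hbot.symm.le.trans (hf bot_le))
  rcases hf01 v with h | h <;> simp [h]

section Oversampling

variable {n k : ℕ}

def hitVector (hkn : k ≤ n) (S : Finset (Fin n)) : Fin k → Bool :=
  fun i => decide (Fin.castLE hkn i ∈ S)

def firstBins (hkn : k ≤ n) : Finset (Fin n) :=
  univ.map (Fin.castLEEmb hkn)

noncomputable def expectation (hkn : k ≤ n) (α : ℝ) (φ : (Fin k → Bool) → ℝ) : ℝ :=
  ∑ S ∈ powersetCard k (univ : Finset (Fin n)), α / n.choose k * φ (hitVector hkn S)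
    + (1 - α) * φ ⊥

theorem filter_disjoint_powersetCard_univ {β : Type*} [Fintype β] [DecidableEq β]
    (T : Finset β) :
    (powersetCard k univ).filter (Disjoint · T) = powersetCard k Tᶜ := by
  ext S
  simp only [mem_filter, mem_powersetCard, subset_univ, true_and, subset_compl_iff_disjoint_right]
  tauto

variable (hkn : k ≤ n)

theorem card_firstBins : #(firstBins hkn) = k := by
  simp [firstBins]

theorem hitVector_firstBins : hitVector hkn (firstBins hkn) = ⊤ := by
  funext i
  simp [hitVector, firstBins]

theorem hitVector_eq_bot_of_disjoint {S : Finset (Fin n)} (hS : Disjoint S (firstBins hkn)) :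
    hitVector hkn S = ⊥ := by
  funext i
  simpa [hitVector] using disjoint_right.1 hS (mem_map_of_mem _ (mem_univ i))

theorem card_powersetCard_not_disjoint_firstBins :
    (#((powersetCard k (univ : Finset (Fin n))).filter (¬ Disjoint · (firstBins hkn))) : ℝ)
      = n.choose k - (n - k).choose k := by
  have h := card_filter_add_card_filter_not (s := powersetCard k (univ : Finset (Fin n)))
    (p := (Disjoint · (firstBins hkn)))
  rw [filter_disjoint_powersetCard_univ, card_powersetCard, card_powersetCard, card_compl,
    card_firstBins, Fintype.card_fin, card_univ, Fintype.card_fin] at h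
  rw [← h]
  push_cast
  ring

theorem sum_hitVector_le {φ : (Fin k → Bool) → ℝ} (h0 : φ ⊥ = 0) (h1 : ∀ v, φ v ≤ 1) :
    ∑ S ∈ powersetCard k (univ : Finset (Fin n)), φ (hitVector hkn S)
      ≤ n.choose k - (n - k).choose k := by
  classical
  rw [← card_powersetCard_not_disjoint_firstBins hkn,
    ← sum_filter_of_ne (p := (¬ Disjoint · (firstBins hkn)))]
  · simpa using sum_le_card_nsmul _ _ 1 fun S _ => h1 (hitVector hkn S)
  · intro S _ hS hdisj
    exact hS (by rw [hitVector_eq_bot_of_disjoint hkn hdisj, h0])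

variable (α : ℝ)

theorem expectation_one : expectation hkn α 1 = 1 := by
  have hC : (n.choose k : ℝ) ≠ 0 := by exact_mod_cast (Nat.choose_pos hkn).ne'
  simp only [expectation, Pi.one_apply, mul_one, sum_const, card_powersetCard, card_univ,
    Fintype.card_fin, nsmul_eq_mul]
  rw [mul_div_cancel₀ α hC, add_sub_cancel]

theorem expectation_mul_of_eq_one_left {f : (Fin k → Bool) → ℝ} (hf : f = 1)
    (g : (Fin k → Bool) → ℝ) :
    expectation hkn α (f * g) = expectation hkn α f * expectation hkn α g := by
  rw [hf, one_mul, expectation_one, one_mul]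

theorem expectation_of_bot_eq_zero {φ : (Fin k → Bool) → ℝ} (h0 : φ ⊥ = 0) :
    expectation hkn α φ
      = α / n.choose k * ∑ S ∈ powersetCard k (univ : Finset (Fin n)), φ (hitVector hkn S) := by
  simp [expectation, h0, mul_sum]

variable {α}

theorem expectation_le_of_bot_eq_zero (hα : 0 ≤ α) {φ : (Fin k → Bool) → ℝ} (h0 : φ ⊥ = 0)
    (h1 : ∀ v, φ v ≤ 1) :
    expectation hkn α φ ≤ α * (1 - (n - k).choose k / n.choose k) := by
  have hC : (0 : ℝ) < n.choose k := by exact_mod_cast Nat.choose_pos hkn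
  calc expectation hkn α φ ≤ α / n.choose k * (n.choose k - (n - k).choose k) := by
        rw [expectation_of_bot_eq_zero hkn α h0]
        gcongr
        exact sum_hitVector_le hkn h0 h1
    _ = α * (1 - (n - k).choose k / n.choose k) := by
        field_simp

theorem le_expectation_of_bot_eq_zero (hα : 0 ≤ α) {φ : (Fin k → Bool) → ℝ} (h0 : φ ⊥ = 0)
    (hφ : 0 ≤ φ) :
    α / n.choose k * φ ⊤ ≤ expectation hkn α φ := by
  rw [expectation_of_bot_eq_zero hkn α h0, ← hitVector_firstBins hkn]
  gcongr
  refine single_le_sum (f := fun S => φ (hitVector hkn S)) (fun S _ => hφ _) ?_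
  simp [mem_powersetCard, card_firstBins]

theorem expectation_mul_expectation_le_of_bot_eq_zero (hα : 0 ≤ α)
    (hcond : α * (n.choose k : ℝ) * (1 - ((n - k).choose k : ℝ) / n.choose k) ^ 2 ≤ 1)
    {f g : (Fin k → Bool) → ℝ} (hf01 : ∀ v, f v = 0 ∨ f v = 1) (hg01 : ∀ v, g v = 0 ∨ g v = 1)
    (hf : Monotone f) (hg : Monotone g) (hf0 : f ⊥ = 0) (hg0 : g ⊥ = 0) :
    expectation hkn α f * expectation hkn α g ≤ expectation hkn α (f * g) := by
  have hf_nonneg : 0 ≤ f := fun v => by rcases hf01 v with h | h <;> simp [h]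
  have hg_nonneg : 0 ≤ g := fun v => by rcases hg01 v with h | h <;> simp [h]
  have hfg0 : (f * g) ⊥ = 0 := by simp [hf0]
  rcases hf01 ⊤ with hfT | hfT
  · have : f = 0 := le_antisymm (fun _ => (hf le_top).trans_eq hfT) hf_nonneg
    simp [this, expectation]
  rcases hg01 ⊤ with hgT | hgT
  · have : g = 0 := le_antisymm (fun _ => (hg le_top).trans_eq hgT) hg_nonneg
    simp [this, expectation]
  set p : ℝ := 1 - ((n - k).choose k : ℝ) / n.choose k
  have hC : (0 : ℝ) < n.choose k := by exact_mod_cast Nat.choose_pos hkn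
  have hE_nonneg {φ : (Fin k → Bool) → ℝ} (h0 : φ ⊥ = 0) (hφ : 0 ≤ φ) :
      0 ≤ expectation hkn α φ :=
    (mul_nonneg (by positivity) (hφ ⊤)).trans (le_expectation_of_bot_eq_zero hkn hα h0 hφ)
  have hEf_le := expectation_le_of_bot_eq_zero hkn hα hf0 fun v => by
    rcases hf01 v with h | h <;> simp [h]
  have hEg_le := expectation_le_of_bot_eq_zero hkn hα hg0 fun v => by
    rcases hg01 v with h | h <;> simp [h]
  calc expectation hkn α f * expectation hkn α g ≤ α * p * (α * p) :=
        mul_le_mul hEf_le hEg_le (hE_nonneg hg0 hg_nonneg)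
          ((hE_nonneg hf0 hf_nonneg).trans hEf_le)
    _ = α / n.choose k * (α * n.choose k * p ^ 2) := by field_simp
    _ ≤ α / n.choose k * (f * g) ⊤ := by
        rw [Pi.mul_apply, hfT, hgT, one_mul]
        gcongr
    _ ≤ expectation hkn α (f * g) :=
        le_expectation_of_bot_eq_zero hkn hα hfg0 (mul_nonneg hf_nonneg hg_nonneg)

end Oversampling

theorem stmt_7_general (n k : ℕ) (hkn : k ≤ n) (α : ℝ) (hα0 : 0 < α)
    (hcond : α * (Nat.choose n k : ℝ) *
        (1 - (Nat.choose (n - k) k : ℝ) / (Nat.choose n k : ℝ)) ^ 2 ≤ 1)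
    (f g : (Fin k → Bool) → ℝ)
    (hf01 : ∀ v, f v = 0 ∨ f v = 1) (hg01 : ∀ v, g v = 0 ∨ g v = 1)
    (hf : Monotone f) (hg : Monotone g) :
    (∑ S ∈ Finset.powersetCard k (Finset.univ : Finset (Fin n)),
          (α / (Nat.choose n k : ℝ)) *
            (f (fun i => decide (Fin.castLE hkn i ∈ S)) *
              g (fun i => decide (Fin.castLE hkn i ∈ S))))
        + (1 - α) * (f (fun _ => false) * g (fun _ => false))
      ≥ ((∑ S ∈ Finset.powersetCard k (Finset.univ : Finset (Fin n)),
            (α / (Nat.choose n k : ℝ)) * f (fun i => decide (Fin.castLE hkn i ∈ S)))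
          + (1 - α) * f (fun _ => false)) *
        ((∑ S ∈ Finset.powersetCard k (Finset.univ : Finset (Fin n)),
            (α / (Nat.choose n k : ℝ)) * g (fun i => decide (Fin.castLE hkn i ∈ S)))
          + (1 - α) * g (fun _ => false)) := by
  change expectation hkn α f * expectation hkn α g ≤ expectation hkn α (f * g)
  rcases hf01 ⊥ with hf0 | hf1
  · rcases hg01 ⊥ with hg0 | hg1
    · exact expectation_mul_expectation_le_of_bot_eq_zero hkn hα0.le hcond hf01 hg01 hf hg hf0 hg0
    · rw [mul_comm f, mul_comm (expectation hkn α f)]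
      exact (expectation_mul_of_eq_one_left hkn α (hg.eq_one_of_map_bot_eq_one hg01 hg1) f).ge
  · exact (expectation_mul_of_eq_one_left hkn α (hf.eq_one_of_map_bot_eq_one hf01 hf1) g).ge

/-- The "Poisson oversampling" balls-and-bins association result at the heart of the proof of
Theorem 2 of the paper.  With probability `α`, `k` balls are thrown into `k` distinct bins
chosen uniformly at random among `n` bins (a uniformly random `k`-element subset `S`), and with
probability `1 - α` no balls are thrown.  The random binary vector `A ∈ {0,1}^k` records which
of the first `k` bins receive a ball.  Expectations are written out explicitly as sums over the
finite sample space (pairs of a `k`-subset `S` with weight `α / C(n,k)`, plus the no-throw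
outcome with weight `1 - α`).  If `α·C(n,k)·p² ≤ 1`, where
`p = 1 - C(n-k,k)/C(n,k)` is the probability that a thrown set of balls hits the first `k`
bins at all, then any two nondecreasing binary-valued functions `f, g` of `A` are positively
correlated. -/
theorem stmt_7 (n k : ℕ) (hk : 1 ≤ k) (hkn : k ≤ n) (α : ℝ) (hα0 : 0 < α) (hα1 : α ≤ 1)
    (hcond : α * (Nat.choose n k : ℝ) *
        (1 - (Nat.choose (n - k) k : ℝ) / (Nat.choose n k : ℝ)) ^ 2 ≤ 1)
    (f g : (Fin k → Bool) → ℝ)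
    (hf01 : ∀ v, f v = 0 ∨ f v = 1) (hg01 : ∀ v, g v = 0 ∨ g v = 1)
    (hf : Monotone f) (hg : Monotone g) :
    (∑ S ∈ Finset.powersetCard k (Finset.univ : Finset (Fin n)),
          (α / (Nat.choose n k : ℝ)) *
            (f (fun i => decide (Fin.castLE hkn i ∈ S)) *
              g (fun i => decide (Fin.castLE hkn i ∈ S))))
        + (1 - α) * (f (fun _ => false) * g (fun _ => false))
      ≥ ((∑ S ∈ Finset.powersetCard k (Finset.univ : Finset (Fin n)),
            (α / (Nat.choose n k : ℝ)) * f (fun i => decide (Fin.castLE hkn i ∈ S)))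
          + (1 - α) * f (fun _ => false)) *
        ((∑ S ∈ Finset.powersetCard k (Finset.univ : Finset (Fin n)),
            (α / (Nat.choose n k : ℝ)) * g (fun i => decide (Fin.castLE hkn i ∈ S)))
          + (1 - α) * g (fun _ => false)) :=
  stmt_7_general n k hkn α hα0 hcond f g hf01 hg01 hf hg
end

section
/- Fix integers n and k with 1 ≤ k ≤ n and a real α with 0 < α ≤ 1. Let S be a uniformly random k-element subset of {1,…,n} and let B be a Bernoulli(α) random variable independent of S. Define the random vector A ∈ {0,1}^k by A_i = B·1{i ∈ S} for i = 1,…,k, and let p = 1 − C(n−k,k)/C(n,k) (with C(n−k,k) = 0 if k > n−k). If α·C(n,k)·p² ≤ 1, then P(A_1 = 1, A_2 = 1, …, A_k = 1) ≥ ∏_{i=1}^{k} P(A_i = 1), i.e., α/C(n,k) ≥ (α·k/n)^k. -/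
/-!
Put `C = C(n,k)` and `t = k/n`. Since `n · C(n-k,k) ≤ C · (n-k)`, we have `t ≤ p`, so the
hypothesis gives `α C t² ≤ 1`; moreover `C t ≥ 1`. For `k ≥ 2` this yields
`(α t)^k C ≤ (α t)^k C (C t)^(k-2) = α (α C t²)^(k-1) ≤ α`, and for `k = 1` both sides equal `α/n`.
-/

theorem Nat.le_choose_mul {n k : ℕ} (hk : 1 ≤ k) (hkn : k ≤ n) : n ≤ n.choose k * k := by
  obtain ⟨m, rfl⟩ : ∃ m, n = m + 1 := ⟨n - 1, by omega⟩
  obtain ⟨j, rfl⟩ : ∃ j, k = j + 1 := ⟨k - 1, by omega⟩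
  rw [← add_one_mul_choose_eq]
  exact Nat.le_mul_of_pos_right _ (choose_pos (by omega))

theorem Nat.mul_choose_sub_le (n k : ℕ) : n * (n - k).choose k ≤ n.choose k * (n - k) := by
  rcases n with _ | m
  · simp
  rcases k with _ | j
  · simp
  calc (m + 1) * (m + 1 - (j + 1)).choose (j + 1)
      ≤ (m + 1) * m.choose (j + 1) := Nat.mul_le_mul_left _ (choose_le_choose _ (by omega))
    _ = (m + 1).choose (j + 1) * (m + 1 - (j + 1)) := by rw [mul_comm, choose_mul_succ_eq]

theorem choose_sub_div_choose_le {n k : ℕ} (hkn : k ≤ n) (hn : 0 < n) :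
    ((n - k).choose k : ℝ) / n.choose k ≤ 1 - k / n := by
  have hC : (0 : ℝ) < n.choose k := by exact_mod_cast Nat.choose_pos hkn
  have hnR : (0 : ℝ) < n := by exact_mod_cast hn
  have key : (n : ℝ) * (n - k).choose k ≤ n.choose k * (n - k) := by
    rw [← Nat.cast_sub hkn]
    exact_mod_cast Nat.mul_choose_sub_le n k
  rw [div_le_iff₀ hC, one_sub_div hnR.ne', div_mul_eq_mul_div, le_div_iff₀ hnR]
  linarith

theorem pow_mul_le_div_of_mul_sq_le_one {u c t : ℝ} {k : ℕ} (hu : 0 ≤ u) (hc : 0 < c) (ht : 0 ≤ t)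
    (hk : 2 ≤ k) (huct : u * c * t ^ 2 ≤ 1) (hct : 1 ≤ c * t) : (u * t) ^ k ≤ u / c := by
  obtain ⟨m, rfl⟩ : ∃ m, k = m + 2 := ⟨k - 2, by omega⟩
  rw [le_div_iff₀ hc]
  calc (u * t) ^ (m + 2) * c ≤ (u * t) ^ (m + 2) * c * (c * t) ^ m :=
        le_mul_of_one_le_right (by positivity) (one_le_pow₀ hct)
    _ = u * (u * c * t ^ 2) ^ (m + 1) := by ring
    _ ≤ u := mul_le_of_le_one_right hu (pow_le_one₀ (by positivity) huct)

theorem stmt_8_general (n k : ℕ) (hk : 1 ≤ k) (hkn : k ≤ n) (α : ℝ) (hα0 : 0 < α)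
    (hcond : α * (Nat.choose n k : ℝ) *
        (1 - (Nat.choose (n - k) k : ℝ) / (Nat.choose n k : ℝ)) ^ 2 ≤ 1) :
    α / (Nat.choose n k : ℝ) ≥ (α * (k : ℝ) / (n : ℝ)) ^ k := by
  obtain rfl | hk2 : k = 1 ∨ 2 ≤ k := by omega
  · simp [Nat.choose_one_right]
  have hn : 0 < n := by omega
  have hC : (0 : ℝ) < n.choose k := by exact_mod_cast Nat.choose_pos hkn
  have hp : (k : ℝ) / n ≤ 1 - ((n - k).choose k : ℝ) / n.choose k := by
    linarith [choose_sub_div_choose_le hkn hn]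
  have hct : 1 ≤ (n.choose k : ℝ) * (k / n) := by
    rw [mul_div_assoc', le_div_iff₀ (by exact_mod_cast hn), one_mul]
    exact_mod_cast Nat.le_choose_mul hk hkn
  rw [mul_div_assoc]
  exact pow_mul_le_div_of_mul_sq_le_one hα0.le hC (by positivity) hk2
    (le_trans (by gcongr) hcond) hct

/-- A consequence of the "Poisson oversampling" association result in the proof of Theorem 2
of the paper: for the random binary vector `A` (with `P(A = (1,…,1)) = α/C(n,k)` and
`P(A_i = 1) = αk/n`), if `α·C(n,k)·p² ≤ 1` with `p = 1 - C(n-k,k)/C(n,k)`, then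
`P(A_1 = 1, …, A_k = 1) ≥ ∏ᵢ P(A_i = 1)`, i.e. `α/C(n,k) ≥ (αk/n)^k`. -/
theorem stmt_8 (n k : ℕ) (hk : 1 ≤ k) (hkn : k ≤ n) (α : ℝ) (hα0 : 0 < α) (hα1 : α ≤ 1)
    (hcond : α * (Nat.choose n k : ℝ) *
        (1 - (Nat.choose (n - k) k : ℝ) / (Nat.choose n k : ℝ)) ^ 2 ≤ 1) :
    α / (Nat.choose n k : ℝ) ≥ (α * (k : ℝ) / (n : ℝ)) ^ k :=
  stmt_8_general n k hk hkn α hα0 hcond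
end
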